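/- arXiv:2512.15161 — 2 statements merged into one kernel-verified Lean document; each statement's English description precedes it below -/
import Mathlib

section
/- Let F be a field with char(F) ≠ 2 in which every element admits a square root. Then every three-dimensional anti-commutative algebra over F has a two-dimensional subalgebra (a two-dimensional linear subspace closed under the multiplication). -/
/-!
Pick `x ≠ 0`. Left multiplication by `x` kills `x`, so it induces an endomorphism of the plane
`V ⧸ F ∙ x`. Over a field of characteristic `≠ 2` in which everything is a square, the
characteristic polynomial of that endomorphism, a quadratic, has a root; so it has an eigenvector,
which lifts to some `y` with `x * y ∈ F ∙ y + F ∙ x`. By anticommutativity `span {x, y}` is then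
closed under the multiplication.
-/

open Module Polynomial Submodule

theorem Polynomial.exists_isRoot_of_natDegree_eq_two {K : Type*} [Field K] [NeZero (2 : K)]
    (hsq : ∀ a : K, ∃ b, b * b = a) {p : K[X]} (hp : p.natDegree = 2) : ∃ x, p.IsRoot x := by
  have hlead : p.coeff 2 ≠ 0 := by
    rw [← hp]
    exact leadingCoeff_ne_zero.2 (ne_zero_of_natDegree_gt (n := 0) (by omega))
  obtain ⟨s, hs⟩ := hsq (discrim (p.coeff 2) (p.coeff 1) (p.coeff 0))
  obtain ⟨x, hx⟩ := exists_quadratic_eq_zero hlead ⟨s, hs.symm⟩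
  refine ⟨x, ?_⟩
  rw [IsRoot, eval_eq_sum_range, hp, Finset.sum_range_succ, Finset.sum_range_succ,
    Finset.sum_range_one]
  linear_combination hx

theorem Module.End.exists_hasEigenvalue_of_finrank_eq_two {K V : Type*} [Field K] [NeZero (2 : K)]
    (hsq : ∀ a : K, ∃ b, b * b = a) [AddCommGroup V] [Module K V] (hV : finrank K V = 2)
    (f : End K V) : ∃ μ, f.HasEigenvalue μ := by
  have : FiniteDimensional K V := .of_finrank_pos (by omega)
  obtain ⟨μ, hμ⟩ := f.charpoly.exists_isRoot_of_natDegree_eq_two hsq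
    (by rw [LinearMap.charpoly_natDegree, hV])
  exact ⟨μ, (f.hasEigenvalue_iff_isRoot_charpoly μ).2 hμ⟩

section Bilinear

variable {R M : Type*} [CommRing R] [AddCommGroup M] [Module R M] {B : M →ₗ[R] M →ₗ[R] M}

theorem Submodule.forall_apply_mem_span_iff (B : M →ₗ[R] M →ₗ[R] M) (s : Set M) :
    (∀ u ∈ span R s, ∀ v ∈ span R s, B u v ∈ span R s) ↔ ∀ a ∈ s, ∀ b ∈ s, B a b ∈ span R s := by
  rw [← map₂_le, map₂_span_span, span_le, Set.image2_subset_iff]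
  rfl

theorem LinearMap.IsAlt.apply_mem_span_pair (hB : B.IsAlt) {x y : M} (hxy : B x y ∈ span R {x, y}) :
    ∀ u ∈ span R {x, y}, ∀ v ∈ span R {x, y}, B u v ∈ span R {x, y} := by
  rw [forall_apply_mem_span_iff]
  rintro a (rfl | rfl) b (rfl | rfl)
  · simp [hB.self_eq_zero]
  · exact hxy
  · rw [← hB.neg]
    exact neg_mem hxy
  · simp [hB.self_eq_zero]

noncomputable def LinearMap.leftMulQuotSpanSingleton (B : M →ₗ[R] M →ₗ[R] M) {x : M}
    (hx : B x x = 0) : End R (M ⧸ R ∙ x) :=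
  (R ∙ x).liftQ ((R ∙ x).mkQ ∘ₗ B x) <| (span_singleton_le_iff_mem _ _).2 <| by simp [hx]

theorem LinearMap.leftMulQuotSpanSingleton_mk {x : M} (hx : B x x = 0) (y : M) :
    B.leftMulQuotSpanSingleton hx (Submodule.Quotient.mk y) =
      Submodule.Quotient.mk (B x y) :=
  rfl

end Bilinear

theorem LinearMap.IsAlt.exists_finrank_eq_two_of_hasEigenvector {K V : Type*} [Field K]
    [AddCommGroup V] [Module K V] {B : V →ₗ[K] V →ₗ[K] V} (hB : B.IsAlt) {x : V} (hx : x ≠ 0)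
    {μ : K} {q : V ⧸ K ∙ x} (hq : (B.leftMulQuotSpanSingleton (hB x)).HasEigenvector μ q) :
    ∃ W : Submodule K V, finrank K W = 2 ∧ ∀ u ∈ W, ∀ v ∈ W, B u v ∈ W := by
  obtain ⟨y, rfl⟩ := Submodule.Quotient.mk_surjective _ q
  have hy : y ∉ K ∙ x := fun h => hq.2 ((Submodule.Quotient.mk_eq_zero _).2 h)
  have hxy : B x y - μ • y ∈ K ∙ x := by
    have := hq.apply_eq_smul
    rwa [LinearMap.leftMulQuotSpanSingleton_mk, ← Submodule.Quotient.mk_smul, Submodule.Quotient.eq] at this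
  have hind : LinearIndependent K ![x, y] :=
    (LinearIndependent.pair_iff' hx).2 fun a h => hy (mem_span_singleton.2 ⟨a, h⟩)
  refine ⟨span K {x, y}, ?_, hB.apply_mem_span_pair ?_⟩
  · rw [← Matrix.range_cons_cons_empty x y ![], finrank_span_eq_card hind, Fintype.card_fin]
  · rw [← sub_add_cancel (B x y) (μ • y)]
    exact add_mem (span_mono (by simp) hxy) (smul_mem _ _ (subset_span (by simp)))

theorem three_dim_anticommutative_has_two_dim_subalgebra
    (F : Type*) [Field F] (hchar : ringChar F ≠ 2)
    (hsq : ∀ a : F, ∃ b : F, b * b = a)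
    (V : Type*) [AddCommGroup V] [Module F V]
    (hdim : Module.finrank F V = 3)
    (mul : V →ₗ[F] V →ₗ[F] V)
    (hanti : ∀ x : V, mul x x = 0) :
    ∃ W : Submodule F V, Module.finrank F ↥W = 2 ∧
      ∀ x ∈ W, ∀ y ∈ W, mul x y ∈ W := by
  have : NeZero (2 : F) := ⟨Ring.two_ne_zero hchar⟩
  have : FiniteDimensional F V := .of_finrank_pos (by omega)
  have : Nontrivial V := Module.nontrivial_of_finrank_pos (R := F) (by omega)
  obtain ⟨x, hx⟩ := exists_ne (0 : V)
  have hquot : finrank F (V ⧸ F ∙ x) = 2 := by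
    have := (F ∙ x).finrank_quotient_add_finrank
    rw [finrank_span_singleton hx, hdim] at this
    omega
  obtain ⟨μ, hμ⟩ := End.exists_hasEigenvalue_of_finrank_eq_two hsq hquot
    (mul.leftMulQuotSpanSingleton (hanti x))
  obtain ⟨q, hq⟩ := hμ.exists_hasEigenvector
  exact LinearMap.IsAlt.exists_finrank_eq_two_of_hasEigenvector hanti hx hq
end

section
/- Let F be a field with char(F) ≠ 2, and for a ∈ F let A₅(a) be the algebra on F³ with multiplication e₁·e₂ = e₂, e₁·e₃ = e₃, e₂·e₃ = e₁ + a e₂ (other basis products determined by anti-commutativity). Then for any nonzero a, b ∈ F, the algebras A₅(a) and A₅(b) are isomorphic; an isomorphism is given by the diagonal map e₁ ↦ e₁, e₂ ↦ (b/a)e₂, e₃ ↦ (a/b)e₃. -/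
def mulA5p {F : Type*} [Field F] (a : F) (x y : Fin 3 → F) : Fin 3 → F :=
  ![(x 1 * y 2 - x 2 * y 1),
    (x 0 * y 1 - x 1 * y 0) + a * (x 1 * y 2 - x 2 * y 1),
    (x 0 * y 2 - x 2 * y 0)]

theorem A5a_iso_A5b
    (F : Type*) [Field F] (hchar : ringChar F ≠ 2)
    (a b : F) (ha : a ≠ 0) (hb : b ≠ 0) :
    ∃ g : (Fin 3 → F) ≃ₗ[F] (Fin 3 → F),
      (∀ x y : Fin 3 → F, g (mulA5p a x y) = mulA5p b (g x) (g y)) ∧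
      g ![1, 0, 0] = ![1, 0, 0] ∧
      g ![0, 1, 0] = (b / a) • ![0, 1, 0] ∧
      g ![0, 0, 1] = (a / b) • ![0, 0, 1] := by
  refine ⟨{ toFun := fun x => ![x 0, (b/a) * x 1, (a/b) * x 2],
            invFun := fun x => ![x 0, (a/b) * x 1, (b/a) * x 2],
            map_add' := ?_, map_smul' := ?_,
            left_inv := ?_, right_inv := ?_ }, ?_, ?_, ?_, ?_⟩
  · intro x y; funext i; fin_cases i <;> simp <;> ring
  · intro c x; funext i; fin_cases i <;> simp [smul_eq_mul] <;> ring
  · intro x; funext i; fin_cases i <;> simp <;> field_simp <;> ring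
  · intro x; funext i; fin_cases i <;> simp <;> field_simp <;> ring
  · intro x y; funext i; fin_cases i <;>
      simp [mulA5p] <;> field_simp <;> ring
  · funext i; fin_cases i <;> simp
  · funext i; fin_cases i <;> simp
  · funext i; fin_cases i <;> simp
end
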